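/- arXiv:1312.4289 — 5 statements merged into one kernel-verified Lean document; each statement's English description precedes it below -/
import Mathlib

section
/- Fix an integer l ≥ 1. For all sufficiently large integers N, C_{0,1,l}(N) = ((−1)^{l−1}/N^l) · (1/(2πi)) ∮_{|z|=5} F(z,N) dz, where the contour is the circle of radius 5 around the origin traversed once counterclockwise. -/
/-!
Since `1 - x ^ j = -(x - 1) (1 + x + ⋯ + x ^ (j - 1))`, the integrand defining `C_{0,1,l}(N)`
equals `(-1) ^ N (x - 1) ^ (-(m + 1)) Q(x)` with `m = N - l` and `Q = 1 / [N]_x!` holomorphic near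
`1`; expanding `Q` to order `m` by iterated slopes shows that its residue at `1` is the `m`-th
Taylor coefficient of `Q`. This residue survives a substitution `x = φ(z)` whenever
`φ(z) - φ(c) = (z - c) D(z)` with `D ≠ 0` on a closed disc: in `∮ φ'(z) (φ(z) - φ(c)) ^ n dz` the
powers `n ≤ -2` have primitives, `φ'/(φ - φ(c)) = 1/(z - c) + D'/D` for `n = -1`, and the
holomorphic remainder integrates to zero. For `φ(z) = e^{z/N}`, `φ'` times the integrand at `φ` is
`(-1) ^ (l - 1) N ^ (-l) F(z, N)`; since `5 < 2π`, no `e^{zj/N}` equals `1` for `0 < |z| ≤ 5`, so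
the small circle around `0` may be enlarged to `|z| = 5`.
-/

open Complex Metric Finset Filter Topology
open Set (EqOn MapsTo)
open scoped Real

/-- `F(z,N) = e^{z/N} · N^{l−1} · (1 − e^{z/N})^{l−1} · ∏_{j=1}^N (1 − e^{zj/N})^{−1}`. -/
noncomputable def Ffun (l N : ℕ) (z : ℂ) : ℂ :=
  Complex.exp (z / N) * (N : ℂ) ^ (l - 1) * (1 - Complex.exp (z / N)) ^ (l - 1) *
    ∏ j ∈ Finset.Icc 1 N, (1 - Complex.exp (z * j / N))⁻¹

section IteratedDslope

variable {𝕜 E : Type*} [NontriviallyNormedField 𝕜] [NormedAddCommGroup E] [NormedSpace 𝕜 E]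

/-- `iteratedDslope f a n a` is the `n`-th Taylor coefficient of `f` at `a`. -/
noncomputable def iteratedDslope (f : 𝕜 → E) (a : 𝕜) (n : ℕ) : 𝕜 → E :=
  (dslope · a)^[n] f

theorem iteratedDslope_succ (f : 𝕜 → E) (a : 𝕜) (n : ℕ) :
    iteratedDslope f a (n + 1) = dslope (iteratedDslope f a n) a :=
  Function.iterate_succ_apply' _ _ _

theorem eq_sum_add_pow_smul_iteratedDslope (f : 𝕜 → E) (a x : 𝕜) (n : ℕ) :
    f x = ∑ k ∈ range n, (x - a) ^ k • iteratedDslope f a k a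
      + (x - a) ^ n • iteratedDslope f a n x := by
  induction n with
  | zero => simp [iteratedDslope]
  | succ n ih =>
    have h := sub_smul_dslope (iteratedDslope f a n) a x
    rw [ih, sum_range_succ, iteratedDslope_succ, pow_succ, mul_smul, h, smul_sub]
    abel

theorem inv_sub_pow_mul_eq_sum_add {f : 𝕜 → 𝕜} {a x : 𝕜} (hx : x ≠ a) (n : ℕ) :
    ((x - a) ^ n)⁻¹ * f x = ∑ k ∈ range n, iteratedDslope f a k a * (x - a) ^ ((k : ℤ) - n)
      + iteratedDslope f a n x := by
  have hxa : x - a ≠ 0 := sub_ne_zero.2 hx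
  rw [eq_sum_add_pow_smul_iteratedDslope f a x n, mul_add, mul_sum]
  simp only [smul_eq_mul, inv_mul_cancel_left₀ (pow_ne_zero n hxa)]
  congr 1
  refine sum_congr rfl fun k _ => ?_
  rw [zpow_sub₀ hxa, zpow_natCast, zpow_natCast]
  field_simp

theorem sub_eq_sub_mul_dslope (f : 𝕜 → 𝕜) (a b : 𝕜) : f b - f a = (b - a) * dslope f a b :=
  (sub_smul_dslope f a b).symm

end IteratedDslope

theorem Complex.differentiableOn_iteratedDslope {E : Type*} [NormedAddCommGroup E]
    [NormedSpace ℂ E] [CompleteSpace E] {f : ℂ → E} {s : Set ℂ} {a : ℂ} (hs : s ∈ 𝓝 a)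
    (hf : DifferentiableOn ℂ f s) (n : ℕ) : DifferentiableOn ℂ (iteratedDslope f a n) s := by
  induction n with
  | zero => exact hf
  | succ n ih => rwa [iteratedDslope_succ, Complex.differentiableOn_dslope hs]

section Residue

variable {φ : ℂ → ℂ} {a c : ℂ} {ρ : ℝ}

theorem Differentiable.dslope (hφ : Differentiable ℂ φ) (c : ℂ) :
    Differentiable ℂ (dslope φ c) := by
  rw [← differentiableOn_univ, Complex.differentiableOn_dslope univ_mem]
  exact hφ.differentiableOn

theorem deriv_eq_dslope_add_mul_deriv_dslope (hφ : Differentiable ℂ φ) (c z : ℂ) :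
    deriv φ z = dslope φ c z + (z - c) * deriv (dslope φ c) z := by
  have h := (((hasDerivAt_id' z).sub_const c).mul (hφ.dslope c z).hasDerivAt).const_add (φ c)
  refine (h.congr_of_eventuallyEq (.of_forall fun w => ?_)).deriv.trans (by ring)
  simp only [Pi.mul_apply, ← sub_eq_sub_mul_dslope]
  ring

theorem ne_of_mem_sphere_of_dslope_ne_zero (hρ : 0 < ρ)
    (hD : ∀ z ∈ closedBall c ρ, dslope φ c z ≠ 0) {z : ℂ} (hz : z ∈ sphere c ρ) : φ z ≠ φ c := by
  rw [← sub_ne_zero, sub_eq_sub_mul_dslope]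
  exact mul_ne_zero (sub_ne_zero.2 (ne_of_mem_sphere hz hρ.ne'))
    (hD z (sphere_subset_closedBall hz))

theorem circleIntegral_deriv_mul_comp_eq_zero {h : ℂ → ℂ} {U : Set ℂ} (hU : IsOpen U)
    (hh : DifferentiableOn ℂ h U) (hφ : Differentiable ℂ φ) (hρ : 0 ≤ ρ)
    (hmaps : MapsTo φ (closedBall c ρ) U) :
    ∮ z in C(c, ρ), deriv φ z * h (φ z) = 0 := by
  refine DiffContOnCl.circleIntegral_eq_zero hρ (DifferentiableOn.diffContOnCl fun z hz => ?_)
  have hz' : z ∈ closedBall c ρ := closure_ball_subset_closedBall hz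
  exact ((hφ.deriv z).mul ((hh.differentiableAt (hU.mem_nhds (hmaps hz'))).comp z
    (hφ z))).differentiableWithinAt

theorem circleIntegral_deriv_mul_sub_zpow_eq_zero {n : ℤ} (hn : n ≠ -1) (hφ : Differentiable ℂ φ)
    (hρ : 0 ≤ ρ) (hne : ∀ z ∈ sphere c ρ, φ z ≠ a) :
    ∮ z in C(c, ρ), deriv φ z * (φ z - a) ^ n = 0 := by
  have hn1 : (n + 1 : ℂ) ≠ 0 := by exact_mod_cast (by omega : n + 1 ≠ 0)
  refine circleIntegral.integral_eq_zero_of_hasDerivWithinAt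
    (f := fun z => (φ z - a) ^ (n + 1) / (n + 1)) hρ fun z hz => ?_
  have hd := ((hasDerivAt_zpow (n + 1) _ (.inl (sub_ne_zero.2 (hne z hz)))).comp z
    ((hφ z).hasDerivAt.sub_const a)).div_const (n + 1 : ℂ)
  refine (hd.congr_deriv ?_).hasDerivWithinAt
  push_cast
  field_simp
  rw [add_sub_cancel_right, mul_comm]

theorem circleIntegral_deriv_mul_inv_sub_eq (hφ : Differentiable ℂ φ) (hρ : 0 < ρ) (hφc : φ c = a)
    (hD : ∀ z ∈ closedBall c ρ, dslope φ c z ≠ 0) :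
    ∮ z in C(c, ρ), deriv φ z * (φ z - a)⁻¹ = 2 * π * I := by
  have hsplit : EqOn (fun z => deriv φ z * (φ z - a)⁻¹)
      (fun z => (z - c)⁻¹ + deriv (dslope φ c) z * (dslope φ c z)⁻¹) (sphere c ρ) := by
    intro z hz
    have hzc : z - c ≠ 0 := sub_ne_zero.2 (ne_of_mem_sphere hz hρ.ne')
    have hDz := hD z (sphere_subset_closedBall hz)
    dsimp only
    rw [deriv_eq_dslope_add_mul_deriv_dslope hφ c z, ← hφc, sub_eq_sub_mul_dslope]
    field_simp
  have hcenter : ContinuousOn (fun z => (z - c)⁻¹) (sphere c ρ) :=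
    (continuousOn_id.sub continuousOn_const).inv₀ fun z hz =>
      sub_ne_zero.2 (ne_of_mem_sphere hz hρ.ne')
  have hlog : ContinuousOn (fun z => deriv (dslope φ c) z * (dslope φ c z)⁻¹) (closedBall c ρ) :=
    (hφ.dslope c).deriv.continuous.continuousOn.mul
      ((hφ.dslope c).continuous.continuousOn.inv₀ hD)
  rw [circleIntegral.integral_congr hρ.le hsplit, circleIntegral.integral_add
    (hcenter.circleIntegrable hρ.le) ((hlog.mono sphere_subset_closedBall).circleIntegrable hρ.le),
    circleIntegral.integral_sub_center_inv c hρ.ne',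
    circleIntegral_deriv_mul_comp_eq_zero isOpen_compl_singleton differentiableOn_inv
      (hφ.dslope c) hρ.le hD, add_zero]

theorem circleIntegral_deriv_mul_inv_sub_pow_mul_comp {f : ℂ → ℂ} {U : Set ℂ} (hU : IsOpen U)
    (hf : DifferentiableOn ℂ f U) (hφ : Differentiable ℂ φ) (hρ : 0 < ρ) (hφc : φ c = a)
    (hD : ∀ z ∈ closedBall c ρ, dslope φ c z ≠ 0) (hmaps : MapsTo φ (closedBall c ρ) U) (m : ℕ) :
    ∮ z in C(c, ρ), deriv φ z * (((φ z - a) ^ (m + 1))⁻¹ * f (φ z))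
      = 2 * π * I * iteratedDslope f a m a := by
  have hne : ∀ z ∈ sphere c ρ, φ z ≠ a := fun z hz =>
    hφc ▸ ne_of_mem_sphere_of_dslope_ne_zero hρ hD hz
  have hUa : U ∈ 𝓝 a := hU.mem_nhds (hφc ▸ hmaps (mem_closedBall_self hρ.le))
  have hrem := Complex.differentiableOn_iteratedDslope hUa hf (m + 1)
  have hsplit : EqOn (fun z => deriv φ z * (((φ z - a) ^ (m + 1))⁻¹ * f (φ z)))
      (fun z => ∑ k ∈ range (m + 1), iteratedDslope f a k a *
          (deriv φ z * (φ z - a) ^ ((k : ℤ) - (m + 1 : ℕ)))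
        + deriv φ z * iteratedDslope f a (m + 1) (φ z)) (sphere c ρ) := by
    intro z hz
    simp only
    rw [inv_sub_pow_mul_eq_sum_add (hne z hz), mul_add, mul_sum]
    exact congrArg₂ _ (sum_congr rfl fun k _ => by ring) rfl
  have hpole (k : ℕ) : ContinuousOn (fun z => iteratedDslope f a k a *
      (deriv φ z * (φ z - a) ^ ((k : ℤ) - (m + 1 : ℕ)))) (sphere c ρ) :=
    continuousOn_const.mul (hφ.deriv.continuous.continuousOn.mul
      ((hφ.continuous.continuousOn.sub continuousOn_const).zpow₀ _
        fun z hz => .inl (sub_ne_zero.2 (hne z hz))))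
  have hholo : ContinuousOn (fun z => deriv φ z * iteratedDslope f a (m + 1) (φ z))
      (closedBall c ρ) :=
    hφ.deriv.continuous.continuousOn.mul (hrem.continuousOn.comp hφ.continuous.continuousOn hmaps)
  rw [circleIntegral.integral_congr hρ.le hsplit, circleIntegral.integral_add
      (continuousOn_finsetSum _ (fun k _ => hpole k) |>.circleIntegrable hρ.le)
      (hholo.mono sphere_subset_closedBall |>.circleIntegrable hρ.le),
    circleIntegral.integral_fun_sum fun k _ => (hpole k).circleIntegrable hρ.le,
    circleIntegral_deriv_mul_comp_eq_zero hU hrem hφ hρ.le hmaps, add_zero,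
    sum_eq_single_of_mem m (self_mem_range_succ m) fun k hk hkm => ?_]
  · rw [circleIntegral.integral_const_mul, show (m : ℤ) - (m + 1 : ℕ) = -1 by push_cast; ring]
    simp only [zpow_neg_one]
    rw [circleIntegral_deriv_mul_inv_sub_eq hφ hρ hφc hD, mul_comm]
  · have hk' : (k : ℤ) - (m + 1 : ℕ) ≠ -1 := by
      have := mem_range.1 hk
      omega
    rw [circleIntegral.integral_const_mul,
      circleIntegral_deriv_mul_sub_zpow_eq_zero hk' hφ hρ.le hne, mul_zero]

theorem circleIntegral_inv_sub_pow_mul {f : ℂ → ℂ} {U : Set ℂ} {r : ℝ} (hU : IsOpen U)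
    (hf : DifferentiableOn ℂ f U) (hr : 0 < r) (hsub : closedBall a r ⊆ U) (m : ℕ) :
    ∮ x in C(a, r), ((x - a) ^ (m + 1))⁻¹ * f x = 2 * π * I * iteratedDslope f a m a := by
  have hD : ∀ x ∈ closedBall a r, dslope id a x ≠ 0 := by
    intro x _
    rcases eq_or_ne x a with rfl | hx
    · simp [dslope_same]
    · simp [dslope_of_ne _ hx, slope_def_field, sub_ne_zero.2 hx]
  simpa using circleIntegral_deriv_mul_inv_sub_pow_mul_comp hU hf differentiable_id hr rfl hD hsub m

end Residue

def qFactorial {R : Type*} [CommSemiring R] (N : ℕ) (x : R) : R :=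
  ∏ j ∈ Icc 1 N, ∑ i ∈ range j, x ^ i

theorem qFactorial_one_ne_zero {R : Type*} [CommSemiring R] [NoZeroDivisors R] [Nontrivial R]
    [CharZero R] (N : ℕ) : qFactorial N (1 : R) ≠ 0 := by
  simp only [qFactorial, one_pow, sum_const, card_range, nsmul_eq_mul, mul_one, prod_ne_zero_iff,
    mem_Icc]
  exact fun j hj => Nat.cast_ne_zero.2 (by omega)

theorem differentiable_qFactorial (N : ℕ) : Differentiable ℂ (qFactorial N : ℂ → ℂ) := by
  unfold qFactorial
  fun_prop

theorem isOpen_setOf_qFactorial_ne_zero (N : ℕ) : IsOpen {x : ℂ | qFactorial N x ≠ 0} :=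
  isOpen_ne_fun (differentiable_qFactorial N).continuous continuous_const

theorem differentiableOn_inv_qFactorial (N : ℕ) :
    DifferentiableOn ℂ (fun x => (qFactorial N x)⁻¹) {x : ℂ | qFactorial N x ≠ 0} :=
  fun x hx => ((differentiable_qFactorial N x).inv hx).differentiableWithinAt

theorem pow_mul_inv_pow_add_succ {K : Type*} [Field K] (y : K) (l m : ℕ) :
    y ^ l * (y ^ (l + m + 1))⁻¹ = (y ^ (m + 1))⁻¹ := by
  rcases eq_or_ne y 0 with rfl | hy
  · simp
  · rw [add_assoc, pow_add, mul_inv, ← mul_assoc, mul_inv_cancel₀ (pow_ne_zero l hy), one_mul]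

theorem sub_one_pow_mul_prod_inv_one_sub_pow {K : Type*} [Field K] (x : K) (l m : ℕ) :
    (x - 1) ^ l * ∏ j ∈ Icc 1 (l + m + 1), (1 - x ^ j)⁻¹
      = (-1) ^ (l + m + 1) * (((x - 1) ^ (m + 1))⁻¹ * (qFactorial (l + m + 1) x)⁻¹) := by
  have hfactor (j : ℕ) : 1 - x ^ j = -(x - 1) * ∑ i ∈ range j, x ^ i := by
    linear_combination geom_sum_mul x j
  simp only [qFactorial, hfactor, mul_inv, prod_mul_distrib, prod_const, Nat.card_Icc,
    add_tsub_cancel_right, prod_inv_distrib, inv_pow, ← mul_assoc]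
  rw [neg_pow, mul_inv, ← inv_pow, inv_neg_one, ← pow_mul_inv_pow_add_succ (x - 1) l m]
  ring

theorem eventually_circleIntegral_sub_one_pow_mul_prod_inv_one_sub_pow (k m : ℕ) :
    ∀ᶠ r in 𝓝[>] (0 : ℝ),
      ∮ x in C(1, r), (x - 1) ^ k * ∏ j ∈ Icc 1 (k + m + 1), (1 - x ^ j)⁻¹
        = (-1) ^ (k + m + 1) *
          (2 * π * I * iteratedDslope (fun x => (qFactorial (k + m + 1) x)⁻¹) 1 m 1) := by
  have hU := isOpen_setOf_qFactorial_ne_zero (k + m + 1)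
  filter_upwards [self_mem_nhdsWithin, nhdsWithin_le_nhds (eventually_closedBall_subset
    (hU.mem_nhds (qFactorial_one_ne_zero (k + m + 1))))] with r hr hrU
  simp only [sub_one_pow_mul_prod_inv_one_sub_pow, circleIntegral.integral_const_mul]
  rw [circleIntegral_inv_sub_pow_mul hU (differentiableOn_inv_qFactorial _) hr hrU]

theorem Complex.exp_ne_one_of_norm_lt {w : ℂ} (hw : w ≠ 0) (hw' : ‖w‖ < 2 * π) : exp w ≠ 1 := by
  rw [Ne, exp_eq_one_iff]
  rintro ⟨n, rfl⟩
  have hn : n ≠ 0 := by rintro rfl; simp at hw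
  have h1 : (1 : ℝ) ≤ |(n : ℝ)| := by exact_mod_cast Int.one_le_abs hn
  simp only [norm_mul, norm_intCast, norm_I, mul_one, Complex.norm_ofNat, norm_real,
    Real.norm_eq_abs, abs_of_pos Real.pi_pos] at hw'
  nlinarith [Real.pi_pos]

theorem hasDerivAt_exp_div (N : ℕ) (z : ℂ) :
    HasDerivAt (fun w => exp (w / N)) (exp (z / N) / N) z := by
  simpa [div_eq_mul_inv] using ((hasDerivAt_id z).div_const (N : ℂ)).cexp

theorem dslope_exp_div_ne_zero {N : ℕ} (hN : N ≠ 0) {z : ℂ} (hz : ‖z‖ < 2 * π * N) :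
    dslope (fun w => exp (w / N)) 0 z ≠ 0 := by
  rcases eq_or_ne z 0 with rfl | hz0
  · rw [dslope_same, (hasDerivAt_exp_div N 0).deriv]
    simp [hN]
  · rw [dslope_of_ne _ hz0, slope_def_field, zero_div, exp_zero, sub_zero]
    refine div_ne_zero (sub_ne_zero.2 (exp_ne_one_of_norm_lt (div_ne_zero hz0
      (Nat.cast_ne_zero.2 hN)) ?_)) hz0
    rwa [norm_div, Complex.norm_natCast, div_lt_iff₀ (by positivity)]

theorem Ffun_succ_eq (l : ℕ) {N : ℕ} (hN : N ≠ 0) (z : ℂ) :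
    Ffun (l + 1) N z = (-1) ^ l * (N : ℂ) ^ (l + 1) *
      (deriv (fun w => exp (w / N)) z *
        ((exp (z / N) - 1) ^ l * ∏ j ∈ Icc 1 N, (1 - exp (z / N) ^ j)⁻¹)) := by
  have hexp (j : ℕ) : exp (z * j / N) = exp (z / N) ^ j := by
    rw [← Complex.exp_nat_mul]
    congr 1
    ring
  simp only [Ffun, add_tsub_cancel_right, hexp, (hasDerivAt_exp_div N z).deriv]
  rw [show 1 - exp (z / N) = -1 * (exp (z / N) - 1) by ring, mul_pow]
  field_simp
  ring

theorem differentiableAt_Ffun (l N : ℕ) {z : ℂ} (hz : z ≠ 0) (hz' : ‖z‖ < 2 * π) :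
    DifferentiableAt ℂ (Ffun l N) z := by
  have hfactor : ∀ j ∈ Icc 1 N, DifferentiableAt ℂ (fun w => (1 - exp (w * j / N))⁻¹) z := by
    intro j hj
    obtain ⟨hj1, hjN⟩ := mem_Icc.1 hj
    have hN : (0 : ℝ) < N := by exact_mod_cast (hj1.trans hjN)
    have hjN' : (j : ℝ) / N ≤ 1 := by
      rw [div_le_one hN]; exact_mod_cast hjN
    have hw : z * j / N ≠ 0 := by
      have : (j : ℂ) ≠ 0 := by exact_mod_cast (by omega : j ≠ 0)
      exact div_ne_zero (mul_ne_zero hz this) (by exact_mod_cast hN.ne')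
    have hw' : ‖z * j / N‖ < 2 * π := by
      rw [mul_div_assoc, norm_mul, norm_div, Complex.norm_natCast, Complex.norm_natCast]
      exact lt_of_le_of_lt (mul_le_of_le_one_right (norm_nonneg z) hjN') hz'
    exact ((differentiableAt_const 1).sub (by fun_prop)).inv
      (sub_ne_zero.2 (exp_ne_one_of_norm_lt hw hw').symm)
  unfold Ffun
  exact (by fun_prop : DifferentiableAt ℂ (fun w => exp (w / N) * (N : ℂ) ^ (l - 1) *
    (1 - exp (w / N)) ^ (l - 1)) z).mul (DifferentiableAt.fun_finsetProd hfactor)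

theorem circleIntegral_Ffun_eq_of_le (l N : ℕ) {ρ R : ℝ} (hρ : 0 < ρ) (hρR : ρ ≤ R)
    (hR : R < 2 * π) : ∮ z in C(0, R), Ffun l N z = ∮ z in C(0, ρ), Ffun l N z := by
  have hdiff : ∀ z ∈ closedBall (0 : ℂ) R \ ball 0 ρ, DifferentiableAt ℂ (Ffun l N) z := by
    rintro z ⟨hzR, hzρ⟩
    rw [mem_closedBall_zero_iff] at hzR
    rw [mem_ball_zero_iff, not_lt] at hzρ
    exact differentiableAt_Ffun l N (norm_pos_iff.1 (hρ.trans_le hzρ)) (hzR.trans_lt hR)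
  exact Complex.circleIntegral_eq_of_differentiable_on_annulus_off_countable hρ hρR
    Set.countable_empty (fun z hz => (hdiff z hz).continuousAt.continuousWithinAt)
    fun z hz => hdiff z ⟨ball_subset_closedBall hz.1.1,
      fun h => hz.1.2 (ball_subset_closedBall h)⟩

theorem circleIntegral_Ffun_succ (k m : ℕ) :
    ∮ z in C(0, 5), Ffun (k + 1) (k + m + 1) z
      = (-1) ^ k * ((k + m + 1 : ℕ) : ℂ) ^ (k + 1) * (-1) ^ (k + m + 1) *
        (2 * π * I * iteratedDslope (fun x => (qFactorial (k + m + 1) x)⁻¹) 1 m 1) := by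
  set N := k + m + 1
  set φ : ℂ → ℂ := fun w => exp (w / N)
  have hφ : Differentiable ℂ φ := by fun_prop
  have hU := isOpen_setOf_qFactorial_ne_zero N
  have hφU : φ ⁻¹' {x | qFactorial N x ≠ 0} ∈ 𝓝 0 := hφ.continuous.continuousAt.preimage_mem_nhds
    (hU.mem_nhds (by simpa [φ] using qFactorial_one_ne_zero N))
  obtain ⟨ρ, hρU, hρ, hρ5⟩ :=
    (((eventually_closedBall_subset hφU).filter_mono nhdsWithin_le_nhds).and
      (Ioc_mem_nhdsGT (by norm_num : (0 : ℝ) < 5))).exists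
  have hD : ∀ z ∈ closedBall 0 ρ, dslope φ 0 z ≠ 0 := fun z hz => by
    refine dslope_exp_div_ne_zero (by omega) ((mem_closedBall_zero_iff.1 hz).trans_lt ?_)
    nlinarith [Real.pi_gt_three, (Nat.one_le_cast.2 (by omega) : (1 : ℝ) ≤ N)]
  have hF (z : ℂ) : Ffun (k + 1) N z = (-1) ^ k * (N : ℂ) ^ (k + 1) * (-1) ^ N *
      (deriv φ z * (((φ z - 1) ^ (m + 1))⁻¹ * (qFactorial N (φ z))⁻¹)) := by
    rw [Ffun_succ_eq k (by omega) z, sub_one_pow_mul_prod_inv_one_sub_pow]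
    ring
  rw [circleIntegral_Ffun_eq_of_le _ _ hρ hρ5 (by linarith [Real.pi_gt_three])]
  simp only [hF, circleIntegral.integral_const_mul]
  rw [circleIntegral_deriv_mul_inv_sub_pow_mul_comp hU
    (differentiableOn_inv_qFactorial N) hφ hρ (by simp [φ]) hD hρU]

/-- For sufficiently large `N`,
`C_{0,1,l}(N) = ((−1)^{l−1}/N^l) · (1/(2πi)) ∮_{|z|=5} F(z,N) dz`. -/
theorem coef_as_contour_integral (l : ℕ) (hl : 1 ≤ l)
    (Coef : ℕ → ℂ)
    (hCoef : ∀ N : ℕ, 1 ≤ N → ∃ r₀ > 0, ∀ r : ℝ, 0 < r → r < r₀ →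
      Coef N = (2 * Real.pi * Complex.I)⁻¹ *
        ∮ x in C(1, r), (x - 1) ^ (l - 1) * ∏ j ∈ Finset.Icc 1 N, (1 - x ^ j)⁻¹) :
    ∃ N₀ : ℕ, ∀ N : ℕ, N₀ ≤ N →
      Coef N = ((-1 : ℂ) ^ (l - 1) / (N : ℂ) ^ l) * (2 * Real.pi * Complex.I)⁻¹ *
        ∮ z in C(0, 5), Ffun l N z := by
  refine ⟨l, fun N hN => ?_⟩
  obtain ⟨k, rfl⟩ : ∃ k, l = k + 1 := ⟨l - 1, by omega⟩
  obtain ⟨m, rfl⟩ : ∃ m, N = k + m + 1 := ⟨N - k - 1, by omega⟩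
  obtain ⟨r₀, hr₀, hCoefN⟩ := hCoef (k + m + 1) (by omega)
  obtain ⟨r, hr, hr0, hrr₀⟩ :=
    ((eventually_circleIntegral_sub_one_pow_mul_prod_inv_one_sub_pow k m).and
      (Ioo_mem_nhdsGT hr₀)).exists
  have hN0 : ((k + m + 1 : ℕ) : ℂ) ≠ 0 := Nat.cast_ne_zero.2 (by omega)
  have hsign : ((-1 : ℂ) ^ k) ^ 2 = 1 := by rw [← pow_mul, pow_mul', neg_one_sq, one_pow]
  rw [hCoefN r hr0 hrr₀, add_tsub_cancel_right, hr, circleIntegral_Ffun_succ k m]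
  field_simp
  rw [hsign, mul_one]
end

section
/- For every complex z with Re z < 0 and every integer N ≥ 1: −∑_{j=1}^N Log(1 − e^{zj/N}) = ∑_{k=1}^∞ (1/k) · (1 − e^{kz})/(e^{−kz/N} − 1), where the series on the right converges absolutely and Log is the principal complex logarithm. -/
/-!
Each `w_j = e^{zj/N}` lies in the open unit disc, so `-Log(1 - w_j) = ∑_{k ≥ 1} w_j^k / k`.
Summing over `j` and exchanging the finite sum with the series, the `k`-th coefficient is
`(1/k) ∑_{j=1}^N q^j` with `q = e^{kz/N}`, a geometric sum equal to `(1 - q^N)/(q⁻¹ - 1)`.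
Absolute convergence is inherited from the `N` logarithm series.
-/

open Complex Finset

lemma geom_sum_Icc_one_eq_div_inv_sub_one {K : Type*} [Field K] {q : K} (hq0 : q ≠ 0)
    (hq1 : q ≠ 1) (N : ℕ) :
    ∑ j ∈ Icc 1 N, q ^ j = (1 - q ^ N) / (q⁻¹ - 1) := by
  have hq1' : q - 1 ≠ 0 := sub_ne_zero.mpr hq1
  have hq1'' : 1 - q ≠ 0 := sub_ne_zero.mpr hq1.symm
  rw [← Ico_add_one_right_eq_Icc, geom_sum_Ico hq1 (by omega)]
  field_simp
  ring

namespace Complex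

lemma norm_exp_lt_one {w : ℂ} (hw : w.re < 0) : ‖exp w‖ < 1 := by
  rwa [norm_exp, Real.exp_lt_one_iff]

lemma summable_norm_pow_succ_div {w : ℂ} (hw : ‖w‖ < 1) :
    Summable fun k : ℕ => ‖w ^ (k + 1) / ((k : ℂ) + 1)‖ := by
  refine Summable.of_nonneg_of_le (fun _ => norm_nonneg _) (fun k => ?_)
    ((summable_geometric_of_lt_one (norm_nonneg w) hw).comp_injective (add_left_injective 1))
  rw [norm_div, norm_pow, ← Nat.cast_add_one, norm_natCast]
  exact div_le_self (by positivity) (by simp)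

end Complex

lemma sum_Icc_exp_pow_eq (z : ℂ) {N : ℕ} (hN : N ≠ 0) (m : ℕ) (h : exp (m * z / N) ≠ 1) :
    ∑ j ∈ Icc 1 N, exp (z * j / N) ^ m = (1 - exp (m * z)) / (exp (-(m * z) / N) - 1) := by
  have hN' : (N : ℂ) ≠ 0 := Nat.cast_ne_zero.mpr hN
  have hpow : ∀ j : ℕ, exp (z * j / N) ^ m = exp (m * z / N) ^ j := fun j => by
    rw [← exp_nat_mul, ← exp_nat_mul]; ring_nf
  rw [sum_congr rfl fun j _ => hpow j, geom_sum_Icc_one_eq_div_inv_sub_one (exp_ne_zero _) h,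
    ← exp_nat_mul, ← exp_neg, neg_div]
  congr 3
  field_simp

lemma norm_exp_natCast_mul_div_lt_one {z : ℂ} (hz : z.re < 0) {m N : ℕ} (hm : m ≠ 0)
    (hN : N ≠ 0) : ‖exp (m * z / N)‖ < 1 := by
  refine norm_exp_lt_one ?_
  rw [div_natCast_re, ← ofReal_natCast, re_ofReal_mul]
  exact div_neg_of_neg_of_pos (mul_neg_of_pos_of_neg (by positivity) hz) (by positivity)

/-- For `Re z < 0` and `N ≥ 1`,
`−∑_{j=1}^N Log(1 − e^{zj/N}) = ∑_{k=1}^∞ (1/k)·(1 − e^{kz})/(e^{−kz/N} − 1)`,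
with the right-hand series converging absolutely. -/
theorem log_prod_eq_series (z : ℂ) (hz : z.re < 0) (N : ℕ) (hN : 1 ≤ N) :
    Summable (fun k : ℕ =>
      ‖(1 / ((k : ℂ) + 1)) * (1 - Complex.exp (((k : ℂ) + 1) * z)) /
        (Complex.exp (-(((k : ℂ) + 1) * z) / N) - 1)‖) ∧
    -∑ j ∈ Finset.Icc 1 N, Complex.log (1 - Complex.exp (z * j / N)) =
      ∑' k : ℕ, (1 / ((k : ℂ) + 1)) * (1 - Complex.exp (((k : ℂ) + 1) * z)) /
        (Complex.exp (-(((k : ℂ) + 1) * z) / N) - 1) := by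
  have hN0 : N ≠ 0 := by omega
  have hw : ∀ j ∈ Icc 1 N, ‖exp (z * j / N)‖ < 1 := fun j hj => by
    rw [mul_comm]
    exact norm_exp_natCast_mul_div_lt_one hz (by grind) hN0
  have hterm : ∀ k : ℕ, ∑ j ∈ Icc 1 N, exp (z * j / N) ^ (k + 1) / ((k : ℂ) + 1) =
      1 / ((k : ℂ) + 1) * (1 - exp (((k : ℂ) + 1) * z)) / (exp (-(((k : ℂ) + 1) * z) / N) - 1) :=
    fun k => by
      have hq := norm_exp_natCast_mul_div_lt_one (m := k + 1) hz k.succ_ne_zero hN0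
      have hk := sum_Icc_exp_pow_eq z hN0 (k + 1) fun h => hq.ne (by rw [h, norm_one])
      push_cast at hk
      rw [← sum_div, hk]
      ring
  simp only [← hterm]
  refine ⟨?_, ?_⟩
  · exact Summable.of_nonneg_of_le (fun _ => norm_nonneg _) (fun k => norm_sum_le _ _)
      (summable_sum fun j hj => summable_norm_pow_succ_div (hw j hj))
  · rw [← sum_neg_distrib]
    exact (hasSum_sum fun j hj => hasSum_taylorSeries_neg_log' (hw j hj)).tsum_eq.symm
end

section
/- For every complex s with Re s < −1 and every complex w with Re w < 0, the integral ∫_0^∞ x^{s−1}/(e^{−w/x} − 1) dx converges absolutely and equals (−w)^s · Γ(−s) · ζ(−s), where (−w)^s is the principal power, Γ is the Gamma function and ζ is the Riemann zeta function. -/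
/-!
Substituting `x = 1/u` turns the integral into the Mellin transform at `-s` of
`u ↦ 1 / (e^{-w u} - 1)`. Expanding this as the geometric series `∑_{n ≥ 1} e^{n w u}` and
integrating termwise, the `n`-th term contributes `n^s (-w)^s Γ(-s)` by the Gamma integral with
complex scale `-n w` (obtained from the real-scale case by analytic continuation in the scale),
and summing over `n` gives `ζ(-s)`. Since `Re(-s) > 1`, the integrals of the norms of the terms
form a convergent `p`-series, which justifies the interchange and gives absolute convergence.
-/

open MeasureTheory Set Filter Complex
open scoped Topology

theorem integrable_of_hasSum_of_summable_integral_norm {α E ι : Type*} [MeasurableSpace α]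
    {μ : Measure α} [NormedAddCommGroup E] [Countable ι] {F : ι → α → E} {f : α → E}
    (hF_int : ∀ i, Integrable (F i) μ) (hF_sum : Summable fun i ↦ ∫ a, ‖F i a‖ ∂μ)
    (hf : ∀ᵐ a ∂μ, HasSum (F · a) (f a)) : Integrable f μ := by
  refine ⟨aestronglyMeasurable_of_tendsto_ae atTop
    (fun s ↦ Finset.aestronglyMeasurable_fun_sum s fun i _ ↦ (hF_int i).1) hf, ?_⟩
  calc ∫⁻ a, ‖f a‖ₑ ∂μ ≤ ∫⁻ a, ∑' i, ‖F i a‖ₑ ∂μ :=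
        lintegral_mono_ae (hf.mono fun a ha ↦ ha.tsum_eq ▸ enorm_tsum_le_tsum_enorm)
    _ = ∑' i, ENNReal.ofReal (∫ a, ‖F i a‖ ∂μ) := by
        rw [lintegral_tsum fun i ↦ (hF_int i).1.enorm]
        exact tsum_congr fun i ↦ (ofReal_integral_norm_eq_lintegral_enorm (hF_int i)).symm
    _ < ⊤ := by
        rw [← ENNReal.ofReal_tsum_of_nonneg (fun i ↦ integral_nonneg fun _ ↦ norm_nonneg _) hF_sum]
        exact ENNReal.ofReal_lt_top

lemma eqOn_re_pos_of_eq_ofReal {E : Type*} [NormedAddCommGroup E] [NormedSpace ℂ E]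
    [CompleteSpace E] {f g : ℂ → E} (hf : DifferentiableOn ℂ f {z | 0 < z.re})
    (hg : DifferentiableOn ℂ g {z | 0 < z.re}) (hfg : ∀ x : ℝ, 0 < x → f x = g x) :
    EqOn f g {z | 0 < z.re} := by
  have hU : IsOpen {z : ℂ | 0 < z.re} := isOpen_lt continuous_const continuous_re
  have h_ofReal : Tendsto ((↑) : ℝ → ℂ) (𝓝[≠] 1) (𝓝[≠] 1) :=
    continuous_ofReal.continuousWithinAt.tendsto_nhdsWithin fun x hx ↦ by simpa using hx
  have h_real : ∀ᶠ x : ℝ in 𝓝[≠] 1, f x = g x :=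
    eventually_nhdsWithin_of_eventually_nhds ((lt_mem_nhds one_pos).mono hfg)
  exact (hf.analyticOnNhd hU).eqOn_of_preconnected_of_frequently_eq (hg.analyticOnNhd hU)
    (convex_halfSpace_re_gt 0).isPreconnected (by simp) (h_ofReal.frequently h_real.frequently)

theorem HasMellin.comp_inv {E : Type*} [NormedAddCommGroup E] [NormedSpace ℂ E] {f : ℝ → E}
    {s : ℂ} {m : E} (hf : HasMellin f (-s) m) : HasMellin (fun t ↦ f t⁻¹) s m := by
  refine ⟨?_, by rw [mellin_comp_inv, hf.2]⟩
  simp_rw [← Real.rpow_neg_one]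
  rw [MellinConvergent.comp_rpow (by norm_num), ofReal_neg, ofReal_one, div_neg, div_one]
  exact hf.1

lemma hasSum_cexp_neg_mul_nat_succ {x : ℂ} (hx : 0 < x.re) :
    HasSum (fun n : ℕ ↦ cexp (-(x * (n + 1)))) (cexp x - 1)⁻¹ := by
  have hr : ‖cexp (-x)‖ < 1 := by simpa [norm_exp] using hx
  have h_term (n : ℕ) : cexp (-x) * cexp (-x) ^ n = cexp (-(x * (n + 1))) := by
    rw [← pow_succ', ← exp_nat_mul]
    push_cast
    ring_nf
  have h_sum : cexp (-x) * (1 - cexp (-x))⁻¹ = (cexp x - 1)⁻¹ := by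
    rw [exp_neg, ← mul_inv, mul_sub, mul_one, mul_inv_cancel₀ (exp_ne_zero x)]
  simpa only [h_term, h_sum] using (hasSum_geometric_of_norm_lt_one hr).mul_left (cexp (-x))

lemma norm_cexp_neg_mul_ofReal (z : ℂ) (t : ℝ) : ‖cexp (-(z * t))‖ = Real.exp (-(z.re * t)) := by
  simp [norm_exp]

lemma mellinConvergent_cexp_neg_mul {a z : ℂ} (ha : 0 < a.re) (hz : 0 < z.re) :
    MellinConvergent (fun t : ℝ ↦ cexp (-(z * t))) a := by
  rw [MellinConvergent, mellin_convergent_iff_norm subset_rfl measurableSet_Ioi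
    (by fun_prop : Continuous fun t : ℝ ↦ cexp (-(z * t))).aestronglyMeasurable]
  simpa [norm_cexp_neg_mul_ofReal] using
    integrableOn_rpow_mul_exp_neg_mul_rpow (s := a.re - 1) (by linarith) one_pos hz

lemma hasDerivAt_cpow_smul_cexp_neg_mul (a z : ℂ) {t : ℝ} (ht : 0 < t) :
    HasDerivAt (fun z : ℂ ↦ (t : ℂ) ^ (a - 1) • cexp (-(z * t)))
      ((t : ℂ) ^ (a + 1 - 1) • -cexp (-(z * t))) z := by
  have h : HasDerivAt (fun z : ℂ ↦ (t : ℂ) ^ (a - 1) * cexp (-(z * t)))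
      ((t : ℂ) ^ (a - 1) * (cexp (-(z * t)) * -t)) z := by
    simpa using (((hasDerivAt_id z).mul_const (t : ℂ)).neg.cexp).const_mul ((t : ℂ) ^ (a - 1))
  refine h.congr_deriv ?_
  rw [add_sub_right_comm, cpow_add _ _ (ofReal_ne_zero.2 ht.ne'), cpow_one, smul_eq_mul]
  ring

lemma differentiableOn_mellin_cexp_neg_mul {a : ℂ} (ha : 0 < a.re) :
    DifferentiableOn ℂ (fun z : ℂ ↦ mellin (fun t : ℝ ↦ cexp (-(z * t))) a) {z | 0 < z.re} := by
  intro z₀ hz₀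
  set ε := z₀.re / 2
  have hε : 0 < ε := half_pos hz₀
  have h_meas (b : ℂ) {g : ℝ → ℂ} (hg : Continuous g) :
      AEStronglyMeasurable (fun t : ℝ ↦ (t : ℂ) ^ b • g t) (volume.restrict (Ioi 0)) :=
    ContinuousOn.aestronglyMeasurable (fun t ht ↦ ((continuousAt_ofReal_cpow_const _ _
      (Or.inr (ne_of_gt ht))).smul hg.continuousAt).continuousWithinAt) measurableSet_Ioi
  have h_bound : ∀ᵐ t : ℝ ∂(volume.restrict (Ioi 0)), ∀ z ∈ {z : ℂ | ε < z.re},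
      ‖(t : ℂ) ^ (a + 1 - 1) • -cexp (-(z * t))‖ ≤
        ‖(t : ℂ) ^ (a + 1 - 1) • cexp (-((ε : ℂ) * t))‖ := by
    refine (ae_restrict_iff' measurableSet_Ioi).2 (Eventually.of_forall fun t ht z hz ↦ ?_)
    rw [norm_smul, norm_smul, norm_neg, norm_cexp_neg_mul_ofReal, norm_cexp_neg_mul_ofReal,
      ofReal_re]
    gcongr
    · exact le_of_lt ht
    · exact le_of_lt hz
  have h_int := (mellinConvergent_cexp_neg_mul (a := a + 1) (by rw [add_re, one_re]; linarith)
    (z := (ε : ℂ)) (by simpa using hε)).norm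
  have h_deriv := hasDerivAt_integral_of_dominated_loc_of_deriv_le
    (F := fun z (t : ℝ) ↦ (t : ℂ) ^ (a - 1) • cexp (-(z * t)))
    (F' := fun z (t : ℝ) ↦ (t : ℂ) ^ (a + 1 - 1) • -cexp (-(z * t)))
    ((isOpen_lt continuous_const continuous_re).mem_nhds (show ε < z₀.re from half_lt_self hz₀))
    (Eventually.of_forall fun z ↦ h_meas _ (by fun_prop)) (mellinConvergent_cexp_neg_mul ha hz₀)
    (h_meas _ (by fun_prop)) h_bound h_int
    ((ae_restrict_iff' measurableSet_Ioi).2 (Eventually.of_forall fun t ht z _ ↦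
      hasDerivAt_cpow_smul_cexp_neg_mul a z ht))
  exact h_deriv.2.differentiableAt.differentiableWithinAt

lemma mellin_cexp_neg_mul {a z : ℂ} (ha : 0 < a.re) (hz : 0 < z.re) :
    mellin (fun t : ℝ ↦ cexp (-(z * t))) a = z ^ (-a) * Gamma a := by
  refine eqOn_re_pos_of_eq_ofReal (differentiableOn_mellin_cexp_neg_mul ha)
    (fun z hz ↦ ((differentiableAt_id.cpow_const (Or.inl hz)).mul_const _).differentiableWithinAt)
    (fun r hr ↦ ?_) hz
  simp_rw [mellin, smul_eq_mul, id_eq]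
  rw [integral_cpow_mul_exp_neg_mul_Ioi ha hr, one_div,
    inv_cpow _ _ (by simp [arg_ofReal_of_nonneg hr.le, Real.pi_ne_zero.symm]), cpow_neg]

lemma integral_norm_cpow_smul_cexp_neg_mul_nat_succ {σ a : ℂ} (hσ : 0 < σ.re) (ha : 0 < a.re)
    (n : ℕ) :
    ∫ u in Ioi (0 : ℝ), ‖(u : ℂ) ^ (σ - 1) • cexp (-(a * ↑(((n : ℝ) + 1) * u)))‖ =
      1 / ((n : ℝ) + 1) ^ σ.re * ((1 / a.re) ^ σ.re * Real.Gamma σ.re) := by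
  have h_scale : (1 / (a.re * (n + 1))) ^ σ.re = 1 / ((n : ℝ) + 1) ^ σ.re * (1 / a.re) ^ σ.re := by
    rw [mul_comm a.re, ← one_div_mul_one_div, Real.mul_rpow (by positivity) (by positivity),
      Real.div_rpow zero_le_one (by positivity), Real.one_rpow]
  rw [← mul_assoc, ← h_scale, ← Real.integral_rpow_mul_exp_neg_mul_Ioi hσ (by positivity)]
  refine setIntegral_congr_fun measurableSet_Ioi fun u hu ↦ ?_
  rw [norm_smul, norm_cpow_eq_rpow_re_of_pos hu, norm_cexp_neg_mul_ofReal, sub_re, one_re]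
  ring_nf

theorem hasMellin_inv_cexp_mul_sub_one {σ a : ℂ} (hσ : 1 < σ.re) (ha : 0 < a.re) :
    HasMellin (fun u : ℝ ↦ (cexp (a * u) - 1)⁻¹) σ (a ^ (-σ) * Gamma σ * riemannZeta σ) := by
  have hσ₀ : 0 < σ.re := by linarith
  set F : ℕ → ℝ → ℂ := fun n u ↦ (u : ℂ) ^ (σ - 1) • cexp (-(a * ↑(((n : ℝ) + 1) * u)))
  have hF_int (n : ℕ) : IntegrableOn (F n) (Ioi 0) :=
    (MellinConvergent.comp_mul_left (f := fun t : ℝ ↦ cexp (-(a * t))) (by positivity)).2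
      (mellinConvergent_cexp_neg_mul hσ₀ ha)
  have hF_integral (n : ℕ) :
      ∫ u in Ioi 0, F n u = 1 / (n + 1 : ℂ) ^ σ * (a ^ (-σ) * Gamma σ) := by
    rw [← mellin, mellin_comp_mul_left (fun t : ℝ ↦ cexp (-(a * t))) σ (by positivity),
      mellin_cexp_neg_mul hσ₀ ha, smul_eq_mul, cpow_neg, one_div]
    push_cast
    ring
  have hF_sum : Summable fun n ↦ ∫ u in Ioi 0, ‖F n u‖ := by
    simp only [F, integral_norm_cpow_smul_cexp_neg_mul_nat_succ hσ₀ ha]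
    refine Summable.mul_right _ ?_
    exact_mod_cast (summable_nat_add_iff 1).2 (Real.summable_one_div_nat_rpow.2 hσ)
  have hF_bose : ∀ u ∈ Ioi (0 : ℝ), HasSum (F · u) ((u : ℂ) ^ (σ - 1) • (cexp (a * u) - 1)⁻¹) := by
    intro u hu
    have h := (hasSum_cexp_neg_mul_nat_succ (x := a * u) (by simpa using mul_pos ha hu)).const_smul
      ((u : ℂ) ^ (σ - 1))
    convert h using 3 with n
    push_cast
    ring_nf
  have h_zeta : HasSum (fun n : ℕ ↦ 1 / (n + 1 : ℂ) ^ σ) (riemannZeta σ) := by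
    rw [zeta_eq_tsum_one_div_nat_add_one_cpow hσ]
    exact (by exact_mod_cast (summable_nat_add_iff 1).2 (Complex.summable_one_div_nat_cpow.2 hσ) :
      Summable fun n : ℕ ↦ 1 / (n + 1 : ℂ) ^ σ).hasSum
  have h := hasSum_integral_of_summable_integral_norm hF_int hF_sum
  rw [setIntegral_congr_fun measurableSet_Ioi fun u hu ↦ (hF_bose u hu).tsum_eq] at h
  simp only [hF_integral] at h
  refine ⟨integrable_of_hasSum_of_summable_integral_norm hF_int hF_sum
    ((ae_restrict_iff' measurableSet_Ioi).2 (Eventually.of_forall hF_bose)), ?_⟩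
  rw [mellin, h.unique (h_zeta.mul_right _)]
  ring

/-- For `Re s < −1` and `Re w < 0`, the integral `∫_0^∞ x^{s−1}/(e^{−w/x} − 1) dx`
converges absolutely and equals `(−w)^s · Γ(−s) · ζ(−s)` (principal powers). -/
theorem mellin_bose_integral (s w : ℂ) (hs : s.re < -1) (hw : w.re < 0) :
    MeasureTheory.IntegrableOn
      (fun x : ℝ => (x : ℂ) ^ (s - 1) / (Complex.exp (-w / x) - 1)) (Set.Ioi 0) ∧
    ∫ x in Set.Ioi (0 : ℝ), (x : ℂ) ^ (s - 1) / (Complex.exp (-w / x) - 1) =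
      (-w) ^ s * Complex.Gamma (-s) * riemannZeta (-s) := by
  have h := (hasMellin_inv_cexp_mul_sub_one (σ := -s) (a := -w) (by rw [neg_re]; linarith)
    (by rw [neg_re]; linarith)).comp_inv
  rw [neg_neg] at h
  have h_integrand : (fun x : ℝ ↦ (x : ℂ) ^ (s - 1) / (cexp (-w / x) - 1)) =
      fun x : ℝ ↦ (x : ℂ) ^ (s - 1) • (cexp (-w * ↑x⁻¹) - 1)⁻¹ := by
    ext x
    rw [ofReal_inv, smul_eq_mul, div_eq_mul_inv, div_eq_mul_inv]
  rw [h_integrand]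
  exact h
end

section
/- (Jonquière's formula.) For every complex s with Re s > 1 and every complex z with Re z < 0 and 0 < Im z < 2π: ∑_{k=1}^∞ e^{kz} k^{s−1} = (Γ(s)/(2π)^s) · ( i^s · ∑_{n=0}^∞ (z/(2πi) + n)^{−s} + i^{−s} · ∑_{n=0}^∞ (1 − z/(2πi) + n)^{−s} ), where all powers are principal (in particular i^{±s} = e^{±iπs/2}), and both Hurwitz-type series converge absolutely since Re(z/(2πi)) = Im(z)/(2π) ∈ (0,1). (Here z/(2πi) = 1/2 + Log(−e^z)/(2πi) and 1 − z/(2πi) = 1/2 − Log(−e^z)/(2πi) with the principal logarithm.) -/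
/-!
Apply Poisson summation to `f(t) = t^(s-1) e^(zt)` for `t > 0`, `f(t) = 0` for `t ≤ 0`; it is
continuous because `Re s > 1` and decays fast because `Re z < 0`. Summed over the integers it
gives the left-hand side. Its Fourier transform at `ξ` is the Laplace transform of `t^(s-1)` at
`c = 2πiξ - z`, namely `Γ(s) c^(-s)`, which is classical for real `c > 0` and extends to
`Re c > 0` by the identity theorem. With `w = z/(2πi)` we have `2πiξ - z = 2πi(ξ - w)`; for
`ξ = -m` it equals `-i · 2π · (w + m)` and for `ξ = m + 1` it equals `i · 2π · (1 - w + m)`.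
Since `0 < Re w < 1`, each factor in these products has argument in `[-π/2, π/2]`, and the last
one lies in the open right half-plane. So the principal power `(-s)` splits across the products,
and `(∓i)^(-s) = i^(±s)` gives the two Hurwitz series.
-/

open Complex Real Set MeasureTheory Filter Asymptotics Topology FourierTransform

lemma mul_cpow_of_abs_arg_le {a u : ℂ} (ha : |a.arg| ≤ π / 2) (hu : 0 < u.re) (t : ℂ) :
    (a * u) ^ t = a ^ t * u ^ t := by
  rcases eq_or_ne a 0 with rfl | ha0
  · rcases eq_or_ne t 0 with rfl | ht <;> simp [*]
  have hu0 : u ≠ 0 := fun h => by simp [h] at hu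
  obtain ⟨ha₁, ha₂⟩ := abs_le.mp ha
  obtain ⟨hu₁, hu₂⟩ := abs_lt.mp (abs_arg_lt_pi_div_two_iff.mpr (Or.inl hu))
  rw [cpow_def_of_ne_zero (mul_ne_zero ha0 hu0), cpow_def_of_ne_zero ha0,
    cpow_def_of_ne_zero hu0, (log_mul_eq_add_log_iff ha0 hu0).mpr ⟨by linarith, by linarith⟩,
    add_mul, Complex.exp_add]

lemma neg_I_cpow_neg (t : ℂ) : (-I) ^ (-t) = I ^ t := by
  rw [← inv_I, inv_cpow _ _ (by rw [arg_I]; linarith [pi_pos]), cpow_neg, inv_inv]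

lemma norm_cpow_neg_le {s c : ℂ} (hs : 0 ≤ s.re) {r : ℝ} (hr : 0 < r) (hrc : r ≤ ‖c‖) :
    ‖c ^ (-s)‖ ≤ rexp (π * |s.im|) * r ^ (-s.re) := by
  have harg : c.arg * s.im ≤ π * |s.im| :=
    (le_abs_self _).trans ((abs_mul _ _).trans_le
      (mul_le_mul_of_nonneg_right (abs_arg_le_pi c) (abs_nonneg _)))
  calc ‖c ^ (-s)‖ ≤ ‖c‖ ^ (-s).re / rexp (c.arg * (-s).im) := norm_cpow_le c (-s)
    _ = ‖c‖ ^ (-s.re) * rexp (c.arg * s.im) := by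
        rw [neg_re, neg_im, mul_neg, Real.exp_neg, div_inv_eq_mul]
    _ ≤ r ^ (-s.re) * rexp (π * |s.im|) :=
        mul_le_mul (rpow_le_rpow_of_nonpos hr hrc (by linarith)) (Real.exp_le_exp.mpr harg)
          (by positivity) (by positivity)
    _ = _ := mul_comm _ _

lemma summable_norm_mul_intCast_add_cpow_neg {a : ℂ} (ha : a ≠ 0) (b : ℂ) {s : ℂ}
    (hs : 1 < s.re) : Summable fun n : ℤ => ‖(a * n + b) ^ (-s)‖ := by
  have ha' : 0 < ‖a‖ := norm_pos_iff.mpr ha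
  have hlarge : ∀ᶠ n : ℤ in cofinite, max (2 * ‖b‖ / ‖a‖) 1 ≤ |(n : ℝ)| :=
    (tendsto_norm_cocompact_atTop.comp Int.tendsto_coe_cofinite).eventually_ge_atTop _
  refine Summable.of_norm_bounded_eventually
    ((summable_abs_int_rpow hs).mul_left (rexp (π * |s.im|) * (‖a‖ / 2) ^ (-s.re))) ?_
  filter_upwards [hlarge] with n hn
  obtain ⟨hnb, hn1⟩ := max_le_iff.mp hn
  have hb : 2 * ‖b‖ ≤ ‖a‖ * |(n : ℝ)| := by rwa [div_le_iff₀' ha'] at hnb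
  have hlower : ‖a‖ / 2 * |(n : ℝ)| ≤ ‖a * n + b‖ := by
    have := norm_sub_norm_le (a * n) (-b)
    rw [sub_neg_eq_add, norm_neg, norm_mul, norm_intCast] at this
    linarith
  rw [norm_norm, mul_assoc, ← mul_rpow (by positivity) (abs_nonneg _)]
  exact norm_cpow_neg_le (by linarith) (by positivity) hlower

lemma summable_norm_add_natCast_cpow_neg (w : ℂ) {s : ℂ} (hs : 1 < s.re) :
    Summable fun n : ℕ => ‖(w + n) ^ (-s)‖ := by
  simpa [add_comm, Function.comp_def] using
    (summable_norm_mul_intCast_add_cpow_neg one_ne_zero w hs).comp_injective Nat.cast_injective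

lemma integrableOn_rpow_mul_exp_neg_mul {a b : ℝ} (ha : -1 < a) (hb : 0 < b) :
    IntegrableOn (fun t : ℝ => t ^ a * rexp (-(b * t))) (Ioi 0) := by
  simpa using integrableOn_rpow_mul_exp_neg_mul_rpow ha one_pos hb

lemma norm_cpow_mul_cexp_neg_mul {t : ℝ} (ht : 0 < t) (s c : ℂ) :
    ‖(t : ℂ) ^ (s - 1) * cexp (-(c * t))‖ = t ^ (s.re - 1) * rexp (-(c.re * t)) := by
  rw [norm_mul, norm_cpow_eq_rpow_re_of_pos ht, norm_exp]
  simp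

lemma continuousOn_cpow_mul_cexp_neg_mul (s c : ℂ) :
    ContinuousOn (fun t : ℝ => (t : ℂ) ^ (s - 1) * cexp (-(c * t))) (Ioi 0) := fun t ht =>
  ((continuousAt_ofReal_cpow_const t _ (Or.inr (ne_of_gt ht))).mul
    (by fun_prop)).continuousWithinAt

lemma integrableOn_cpow_mul_cexp_neg_mul {s c : ℂ} (hs : 0 < s.re) (hc : 0 < c.re) :
    IntegrableOn (fun t : ℝ => (t : ℂ) ^ (s - 1) * cexp (-(c * t))) (Ioi 0) := by
  refine (integrableOn_rpow_mul_exp_neg_mul (a := s.re - 1) (by linarith) hc).mono'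
    ((continuousOn_cpow_mul_cexp_neg_mul s c).aestronglyMeasurable measurableSet_Ioi) ?_
  filter_upwards [ae_restrict_mem measurableSet_Ioi] with t ht
  exact (norm_cpow_mul_cexp_neg_mul ht s c).le

lemma differentiableOn_integral_cpow_mul_cexp_neg_mul {s : ℂ} (hs : 0 < s.re) :
    DifferentiableOn ℂ (fun c : ℂ => ∫ t in Ioi (0 : ℝ), (t : ℂ) ^ (s - 1) * cexp (-(c * t)))
      {c | 0 < c.re} := by
  intro c₀ (hc₀ : 0 < c₀.re)
  have hball (c : ℂ) (hc : c ∈ Metric.ball c₀ (c₀.re / 2)) : c₀.re / 2 ≤ c.re := by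
    rw [Metric.mem_ball, Complex.dist_eq] at hc
    have h := abs_lt.mp ((abs_re_le_norm (c - c₀)).trans_lt hc)
    rw [sub_re] at h
    linarith [h.1]
  have hbound : ∀ᵐ t : ℝ ∂volume.restrict (Ioi (0 : ℝ)), ∀ c ∈ Metric.ball c₀ (c₀.re / 2),
      ‖-(t : ℂ) * ((t : ℂ) ^ (s - 1) * cexp (-(c * t)))‖ ≤
        t ^ (s.re - 1 + 1) * rexp (-(c₀.re / 2 * t)) := by
    filter_upwards [ae_restrict_mem measurableSet_Ioi] with t (ht : 0 < t) c hc
    rw [norm_mul, norm_neg, norm_real, norm_of_nonneg ht.le, norm_cpow_mul_cexp_neg_mul ht,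
      rpow_add_one ht.ne', mul_left_comm, mul_assoc]
    gcongr
    exact hball c hc
  have hdiff : ∀ᵐ t : ℝ ∂volume.restrict (Ioi (0 : ℝ)), ∀ c ∈ Metric.ball c₀ (c₀.re / 2),
      HasDerivAt (fun c : ℂ => (t : ℂ) ^ (s - 1) * cexp (-(c * t)))
        (-(t : ℂ) * ((t : ℂ) ^ (s - 1) * cexp (-(c * t)))) c := by
    refine Eventually.of_forall fun t c _ => ?_
    exact ((hasDerivAt_mul_const (t : ℂ)).neg.cexp.const_mul ((t : ℂ) ^ (s - 1))).congr_deriv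
      (by simp only [Pi.neg_apply]; ring)
  exact (hasDerivAt_integral_of_dominated_loc_of_deriv_le
    (F := fun (c : ℂ) (t : ℝ) => (t : ℂ) ^ (s - 1) * cexp (-(c * t)))
    (F' := fun (c : ℂ) (t : ℝ) => -(t : ℂ) * ((t : ℂ) ^ (s - 1) * cexp (-(c * t))))
    (Metric.ball_mem_nhds c₀ (by linarith))
    (Eventually.of_forall fun c =>
      (continuousOn_cpow_mul_cexp_neg_mul s c).aestronglyMeasurable measurableSet_Ioi)
    (integrableOn_cpow_mul_cexp_neg_mul hs hc₀)
    ((continuous_ofReal.neg.continuousOn.mul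
      (continuousOn_cpow_mul_cexp_neg_mul s c₀)).aestronglyMeasurable measurableSet_Ioi)
    hbound (integrableOn_rpow_mul_exp_neg_mul (by linarith) (by linarith))
    hdiff).2.differentiableAt.differentiableWithinAt

lemma integral_cpow_mul_cexp_neg_mul_Ioi {s c : ℂ} (hs : 0 < s.re) (hc : 0 < c.re) :
    ∫ t in Ioi (0 : ℝ), (t : ℂ) ^ (s - 1) * cexp (-(c * t)) = Gamma s * c ^ (-s) := by
  have hU : IsOpen {c : ℂ | 0 < c.re} := isOpen_lt continuous_const continuous_re
  have hrhs : DifferentiableOn ℂ (fun c : ℂ => Gamma s * c ^ (-s)) {c | 0 < c.re} := fun c hc =>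
    ((differentiableAt_id.cpow_const (Or.inl hc)).const_mul _).differentiableWithinAt
  have hreal : Tendsto ((↑) : ℝ → ℂ) (𝓝[≠] 1) (𝓝[≠] 1) := by
    rw [tendsto_nhdsWithin_iff]
    exact ⟨tendsto_nhdsWithin_of_tendsto_nhds continuous_ofReal.continuousAt,
      eventually_nhdsWithin_iff.mpr (Eventually.of_forall fun t ht => ofReal_ne_one.mpr ht)⟩
  have hlhs := (differentiableOn_integral_cpow_mul_cexp_neg_mul hs).analyticOnNhd hU
  refine hlhs.eqOn_of_preconnected_of_frequently_eq (hrhs.analyticOnNhd hU)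
    (convex_halfSpace_re_gt 0).isPreconnected (z₀ := 1) (by simp) (hreal.frequently ?_) hc
  refine ((eventually_gt_nhds one_pos).filter_mono nhdsWithin_le_nhds).frequently.mono
    fun r (hr : 0 < r) => ?_
  have harg : (r : ℂ).arg ≠ π := by rw [arg_ofReal_of_nonneg hr.le]; exact pi_ne_zero.symm
  rw [integral_cpow_mul_exp_neg_mul_Ioi hs hr, one_div, inv_cpow _ _ harg, ← cpow_neg, mul_comm]

noncomputable def gammaKernel (s c : ℂ) : ℝ → ℂ :=
  (Ioi 0).indicator fun t => (t : ℂ) ^ (s - 1) * cexp (-(c * t))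

lemma continuous_gammaKernel {s : ℂ} (hs : 1 < s.re) (c : ℂ) : Continuous (gammaKernel s c) := by
  have hs' : 0 < (s - 1).re := by rw [sub_re, one_re]; linarith
  refine continuous_indicator (fun t ht => ?_)
    ((continuous_ofReal_cpow_const hs').mul (by fun_prop)).continuousOn
  rw [frontier_Ioi, mem_singleton_iff] at ht
  simp [ht, zero_cpow (fun h => by simp [h] at hs' : s - 1 ≠ 0)]

lemma gammaKernel_isBigO (s : ℂ) {c : ℂ} (hc : 0 < c.re) (b : ℝ) :
    gammaKernel s c =O[cocompact ℝ] fun x => |x| ^ (-b) := by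
  rw [cocompact_eq_atBot_atTop, isBigO_sup]
  constructor
  · refine (isBigO_zero _ _).congr' ?_ EventuallyEq.rfl
    filter_upwards [eventually_le_atBot 0] with x hx
    exact (indicator_of_notMem (not_lt.mpr hx) _).symm
  · have hlim := tendsto_rpow_mul_exp_neg_mul_atTop_nhds_zero (s.re - 1 + b) c.re hc
    refine IsBigO.of_bound 1 ?_
    filter_upwards [hlim.eventually (eventually_le_nhds one_pos), eventually_gt_atTop 0]
      with x hx hx0
    rw [gammaKernel, indicator_of_mem (mem_Ioi.mpr hx0), norm_cpow_mul_cexp_neg_mul hx0,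
      norm_of_nonneg (by positivity), abs_of_pos hx0, one_mul]
    calc x ^ (s.re - 1) * rexp (-(c.re * x))
        = x ^ (s.re - 1 + b) * rexp (-c.re * x) * x ^ (-b) := by
          rw [rpow_add hx0, rpow_neg hx0.le, neg_mul]
          field_simp
      _ ≤ x ^ (-b) := mul_le_of_le_one_left (by positivity) hx

lemma fourier_gammaKernel {s c : ℂ} (hs : 0 < s.re) (hc : 0 < c.re) (ξ : ℝ) :
    𝓕 (gammaKernel s c) ξ = Gamma s * (c + 2 * π * I * ξ) ^ (-s) := by
  have hre : 0 < (c + 2 * π * I * ξ).re := by simpa using hc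
  rw [fourier_real_eq_integral_exp_smul, ← integral_cpow_mul_cexp_neg_mul_Ioi hs hre,
    ← integral_indicator measurableSet_Ioi]
  congr 1 with t
  by_cases ht : t ∈ Ioi 0
  · rw [gammaKernel, indicator_of_mem ht, indicator_of_mem ht, smul_eq_mul, mul_left_comm,
      ← Complex.exp_add]
    congr 2
    push_cast
    ring
  · simp [gammaKernel, indicator_of_notMem ht]

lemma tsum_int_gammaKernel {s c : ℂ} (hs : 1 < s.re) (hc : 0 < c.re) :
    ∑' n : ℤ, gammaKernel s c n = Gamma s * ∑' n : ℤ, (c + 2 * π * I * n) ^ (-s) := by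
  have hF (n : ℤ) : 𝓕 (gammaKernel s c) n = Gamma s * (c + 2 * π * I * n) ^ (-s) := by
    rw [fourier_gammaKernel (by linarith) hc, ofReal_intCast]
  have hsum : Summable fun n : ℤ => 𝓕 (gammaKernel s c) n := by
    simp_rw [hF, add_comm c]
    exact ((summable_norm_mul_intCast_add_cpow_neg (by simp [pi_ne_zero]) c hs).of_norm).mul_left _
  have := Real.tsum_eq_tsum_fourier_of_rpow_decay_of_summable (continuous_gammaKernel hs c)
    one_lt_two (gammaKernel_isBigO s hc 2) hsum 0
  simpa [hF, tsum_mul_left] using this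

lemma tsum_int_gammaKernel_eq_tsum_nat (s c : ℂ) :
    ∑' n : ℤ, gammaKernel s c n = ∑' k : ℕ, ((k : ℂ) + 1) ^ (s - 1) * cexp (-(c * (k + 1))) := by
  have hsupp : Function.support (fun n : ℤ => gammaKernel s c n) ⊆
      Set.range fun k : ℕ => ((k + 1 : ℕ) : ℤ) := by
    intro n hn
    have hn0 : (0 : ℝ) < n := by
      by_contra h
      exact hn (indicator_of_notMem h _)
    have hn1 : (0 : ℤ) < n := by exact_mod_cast hn0
    exact ⟨(n - 1).toNat, by simp only; omega⟩
  rw [← (Nat.cast_injective.comp (add_left_injective 1)).tsum_eq hsupp]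
  congr 1 with k
  rw [Function.comp_apply, gammaKernel, indicator_of_mem (mem_Ioi.mpr (by positivity))]
  push_cast
  rfl

lemma tsum_int_cpow_neg_two_pi_I_mul_sub {w s : ℂ} (hw₀ : 0 < w.re) (hw₁ : w.re < 1)
    (hs : 1 < s.re) :
    ∑' n : ℤ, (2 * π * I * (n - w)) ^ (-s) =
      ((2 * π : ℝ) : ℂ) ^ (-s) *
        (I ^ s * ∑' n : ℕ, (w + n) ^ (-s) + I ^ (-s) * ∑' n : ℕ, (1 - w + n) ^ (-s)) := by
  have h2π : |((2 * π : ℝ) : ℂ).arg| ≤ π / 2 := by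
    rw [arg_ofReal_of_nonneg two_pi_pos.le, abs_zero]; positivity
  have hI : |I.arg| ≤ π / 2 := by rw [arg_I, abs_of_pos (by positivity)]
  have hnegI : |(-I).arg| ≤ π / 2 := by rw [arg_neg_I, abs_neg, abs_of_pos (by positivity)]
  have hfactor {a u : ℂ} (ha : |a.arg| ≤ π / 2) (hu : 0 < u.re) :
      (a * (((2 * π : ℝ) : ℂ) * u)) ^ (-s) =
        a ^ (-s) * ((2 * π : ℝ) : ℂ) ^ (-s) * u ^ (-s) := by
    rw [mul_cpow_of_abs_arg_le ha (by simpa using mul_pos two_pi_pos hu),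
      mul_cpow_of_abs_arg_le h2π hu, mul_assoc]
  rw [← tsum_comp_neg]
  have hnonpos : HasSum (fun m : ℕ => (2 * π * I * (((-(m : ℤ) : ℤ) : ℂ) - w)) ^ (-s))
      (I ^ s * ((2 * π : ℝ) : ℂ) ^ (-s) * ∑' n : ℕ, (w + n) ^ (-s)) := by
    refine ((summable_norm_add_natCast_cpow_neg w hs).of_norm.hasSum.mul_left
      (I ^ s * ((2 * π : ℝ) : ℂ) ^ (-s))).congr_fun fun m => ?_
    have harg : 2 * π * I * (((-(m : ℤ) : ℤ) : ℂ) - w) = -I * (((2 * π : ℝ) : ℂ) * (w + m)) := by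
      push_cast; ring
    have hre : 0 < (w + m).re := by
      rw [add_re, natCast_re]; exact add_pos_of_pos_of_nonneg hw₀ m.cast_nonneg
    rw [harg, hfactor hnegI hre, neg_I_cpow_neg]
  have hpos : HasSum (fun m : ℕ => (2 * π * I * (((-(-((m : ℤ) + 1)) : ℤ) : ℂ) - w)) ^ (-s))
      (I ^ (-s) * ((2 * π : ℝ) : ℂ) ^ (-s) * ∑' n : ℕ, (1 - w + n) ^ (-s)) := by
    refine ((summable_norm_add_natCast_cpow_neg (1 - w) hs).of_norm.hasSum.mul_left
      (I ^ (-s) * ((2 * π : ℝ) : ℂ) ^ (-s))).congr_fun fun m => ?_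
    have harg : 2 * π * I * (((-(-((m : ℤ) + 1)) : ℤ) : ℂ) - w) =
        I * (((2 * π : ℝ) : ℂ) * (1 - w + m)) := by
      push_cast; ring
    have hre : 0 < (1 - w + m).re := by
      rw [add_re, sub_re, one_re, natCast_re]; linarith [m.cast_nonneg (α := ℝ)]
    rw [harg, hfactor hI hre]
  rw [(HasSum.of_nat_of_neg_add_one
    (f := fun n : ℤ => (2 * π * I * (((-n : ℤ) : ℂ) - w)) ^ (-s)) hnonpos hpos).tsum_eq]
  ring

/-- Jonquière's formula: for `Re s > 1` and `Re z < 0`, `0 < Im z < 2π`,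
`∑_{k≥1} e^{kz} k^{s−1} = (Γ(s)/(2π)^s)(i^s ζ(s, z/(2πi)) + i^{−s} ζ(s, 1 − z/(2πi)))`,
with both Hurwitz-type series converging absolutely (all powers principal). -/
theorem jonquiere (s z : ℂ) (hs : 1 < s.re) (hz : z.re < 0)
    (hz1 : 0 < z.im) (hz2 : z.im < 2 * Real.pi) :
    Summable (fun n : ℕ => ‖(z / (2 * Real.pi * Complex.I) + n) ^ (-s)‖) ∧
    Summable (fun n : ℕ => ‖(1 - z / (2 * Real.pi * Complex.I) + n) ^ (-s)‖) ∧
    ∑' k : ℕ, Complex.exp (((k : ℂ) + 1) * z) * ((k : ℂ) + 1) ^ (s - 1) =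
      Complex.Gamma s / ((2 * Real.pi : ℝ) : ℂ) ^ s *
        (Complex.I ^ s * ∑' n : ℕ, (z / (2 * Real.pi * Complex.I) + n) ^ (-s) +
         Complex.I ^ (-s) * ∑' n : ℕ, (1 - z / (2 * Real.pi * Complex.I) + n) ^ (-s)) := by
  set w := z / (2 * π * I) with hw
  have hzw : z = 2 * π * I * w := by rw [hw, mul_div_cancel₀ _ (by simp [pi_ne_zero])]
  have him : z.im = 2 * π * w.re := by rw [hzw]; simp
  have hw₀ : 0 < w.re := pos_of_mul_pos_right (him ▸ hz1) two_pi_pos.le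
  have hw₁ : w.re < 1 := by nlinarith [pi_pos]
  refine ⟨summable_norm_add_natCast_cpow_neg w hs,
    summable_norm_add_natCast_cpow_neg (1 - w) hs, ?_⟩
  calc ∑' k : ℕ, cexp (((k : ℂ) + 1) * z) * ((k : ℂ) + 1) ^ (s - 1)
      = ∑' n : ℤ, gammaKernel s (-z) n := by
        rw [tsum_int_gammaKernel_eq_tsum_nat]
        congr 1 with k
        ring_nf
    _ = Gamma s * ∑' n : ℤ, (2 * π * I * (n - w)) ^ (-s) := by
        rw [tsum_int_gammaKernel hs (by simpa using hz), hzw]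
        ring_nf
    _ = _ := by
        rw [tsum_int_cpow_neg_two_pi_I_mul_sub hw₀ hw₁ hs, cpow_neg, div_eq_mul_inv]
        ring
end

section
/- For every integer N ≥ 10, every integer j with 1 ≤ j ≤ N/10, and every complex z with Im z = 5 and −N^{−7/8} ≤ Re z ≤ 0: 1 + e^{2j·Re(z)/N} − 2·cos(5j/N)·e^{j·Re(z)/N} ≥ (11 j²)/(12 N²) · ( (Re z)² + 25 ). Equivalently, |1 − e^{zj/N}|² ≥ (11 j²)/(12 N²) · ((Re z)² + 25). -/
/-!
Put `a = j·Re z/N ∈ [-1/30, 0]` and `θ = 5j/N ∈ [0, 1/2]`, so that the bound to prove reads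
`(11/12)(a² + θ²) ≤ (1 - e^a)² + 2(1 - cos θ)e^a`. The two squares are bounded separately:
`1 - e^a ≥ -a e^a` with `e^a ≥ 29/30` handles `a²`, and `1 - cos θ ≥ θ²/2 - 5θ⁴/96`
handles `θ²`. The constraint `Re z ≥ -N^{-7/8} ≥ -1/3` is what keeps `e^a` close enough to `1`.
-/

open Real

theorem Complex.sq_norm_one_sub_exp (w : ℂ) :
    ‖1 - Complex.exp w‖ ^ 2 = 1 + Real.exp (2 * w.re) - 2 * Real.cos w.im * Real.exp w.re := by
  rw [Complex.sq_norm, Complex.normSq_apply]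
  simp only [Complex.sub_re, Complex.sub_im, Complex.one_re, Complex.one_im,
    Complex.exp_re, Complex.exp_im]
  rw [show 2 * w.re = w.re + w.re by ring, Real.exp_add]
  linear_combination Real.exp w.re ^ 2 * Real.sin_sq_add_cos_sq w.im

theorem Real.neg_mul_exp_le_one_sub_exp (a : ℝ) : -a * exp a ≤ 1 - exp a := by
  have h := mul_le_mul_of_nonneg_right (add_one_le_exp (-a)) (exp_pos a).le
  rw [← exp_add, neg_add_cancel, exp_zero] at h
  linarith

theorem Real.sq_div_two_sub_le_one_sub_cos {θ : ℝ} (hθ : |θ| ≤ 1) :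
    θ ^ 2 / 2 - 5 / 96 * θ ^ 4 ≤ 1 - cos θ := by
  have h := (abs_le.mp (cos_bound hθ)).2
  rw [(by decide : Even 4).pow_abs] at h
  linarith

theorem Real.eleven_div_twelve_mul_sq_add_sq_le {a θ : ℝ} (ha₀ : -(1 / 30) ≤ a)
    (ha₁ : a ≤ 0) (hθ₀ : 0 ≤ θ) (hθ₁ : θ ≤ 1 / 2) :
    11 / 12 * (a ^ 2 + θ ^ 2) ≤ 1 + exp (2 * a) - 2 * cos θ * exp a := by
  have hexp_ge : 29 / 30 ≤ exp a := by linarith [add_one_le_exp a]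
  have hsq : 11 / 12 * a ^ 2 ≤ (1 - exp a) ^ 2 := by
    have h := neg_mul_exp_le_one_sub_exp a
    have h_nonneg : 0 ≤ -a * exp a := mul_nonneg (by linarith) (exp_pos a).le
    nlinarith
  have hcos : 11 / 12 * θ ^ 2 ≤ 2 * (1 - cos θ) * exp a := by
    have h := sq_div_two_sub_le_one_sub_cos (θ := θ) (by rw [abs_le]; constructor <;> linarith)
    have hθ_sq : θ ^ 2 ≤ 1 / 4 := by nlinarith
    have h' : 48 / 100 * θ ^ 2 ≤ 1 - cos θ := by
      nlinarith [mul_le_mul_of_nonneg_left hθ_sq (sq_nonneg θ)]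
    nlinarith [sq_nonneg θ]
  rw [show 2 * a = a + a by ring, exp_add]
  nlinarith

theorem Real.rpow_neg_seven_div_eight_le_one_third {x : ℝ} (hx : 9 ≤ x) :
    x ^ (-(7 : ℝ) / 8) ≤ 1 / 3 := by
  have h_sqrt : 3 ≤ √x := by rw [le_sqrt (by norm_num) (by linarith)]; linarith
  have h_rpow : 3 ≤ x ^ ((7 : ℝ) / 8) := by
    rw [sqrt_eq_rpow] at h_sqrt
    linarith [rpow_le_rpow_of_exponent_le (by linarith : (1 : ℝ) ≤ x)
      (by norm_num : (1 : ℝ) / 2 ≤ 7 / 8)]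
  rw [neg_div, rpow_neg (by linarith), inv_le_comm₀ (by linarith) (by norm_num)]
  linarith

theorem small_j_lower_bound_general (N : ℕ) (hN : 10 ≤ N) (j : ℕ)
    (hj2 : (j : ℝ) ≤ (N : ℝ) / 10) (z : ℂ) (hzim : z.im = 5)
    (hre1 : -((N : ℝ) ^ (-(7 : ℝ) / 8)) ≤ z.re) (hre2 : z.re ≤ 0) :
    (11 * (j : ℝ) ^ 2) / (12 * (N : ℝ) ^ 2) * (z.re ^ 2 + 25) ≤
      1 + Real.exp (2 * j * z.re / N)
        - 2 * Real.cos (5 * j / N) * Real.exp (j * z.re / N) ∧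
    (11 * (j : ℝ) ^ 2) / (12 * (N : ℝ) ^ 2) * (z.re ^ 2 + 25) ≤
      ‖1 - Complex.exp (z * j / N)‖ ^ 2 := by
  have hN₀ : (0 : ℝ) < N := by positivity
  have hN₁ : (10 : ℝ) ≤ N := by exact_mod_cast hN
  have hre : -(1 / 3) ≤ z.re := by
    linarith [rpow_neg_seven_div_eight_le_one_third (by linarith : (9 : ℝ) ≤ N)]
  have ht₀ : 0 ≤ (j : ℝ) / N := by positivity
  have ht₁ : (j : ℝ) / N ≤ 1 / 10 := by rw [div_le_iff₀ hN₀]; linarith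
  have h_real : (11 * (j : ℝ) ^ 2) / (12 * (N : ℝ) ^ 2) * (z.re ^ 2 + 25)
      ≤ 1 + exp (2 * (j / N * z.re)) - 2 * cos (5 * (j / N)) * exp (j / N * z.re) := by
    convert eleven_div_twelve_mul_sq_add_sq_le (a := j / N * z.re) (θ := 5 * (j / N))
      (by nlinarith) (mul_nonpos_of_nonneg_of_nonpos ht₀ hre2) (by positivity) (by linarith)
      using 1
    field_simp; ring
  refine ⟨?_, ?_⟩
  · rwa [show 2 * j * z.re / N = 2 * (j / N * z.re) by ring,
      show 5 * j / N = 5 * (j / N : ℝ) by ring, show j * z.re / N = j / N * z.re by ring]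
  · rwa [show z * j / N = ((j / N : ℝ) : ℂ) * z by push_cast; ring,
      Complex.sq_norm_one_sub_exp, Complex.re_ofReal_mul, Complex.im_ofReal_mul, hzim,
      mul_comm _ (5 : ℝ)]

/-- The polynomial lower bound used in Lemma 4.1: for `N ≥ 10`, `1 ≤ j ≤ N/10`,
`Im z = 5` and `−N^{−7/8} ≤ Re z ≤ 0`,
`1 + e^{2j·Re z/N} − 2cos(5j/N)e^{j·Re z/N} ≥ (11j²/(12N²))((Re z)² + 25)`;
equivalently `|1 − e^{zj/N}|² ≥ (11j²/(12N²))((Re z)² + 25)`. -/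
theorem small_j_lower_bound (N : ℕ) (hN : 10 ≤ N) (j : ℕ) (hj1 : 1 ≤ j)
    (hj2 : (j : ℝ) ≤ (N : ℝ) / 10) (z : ℂ) (hzim : z.im = 5)
    (hre1 : -((N : ℝ) ^ (-(7 : ℝ) / 8)) ≤ z.re) (hre2 : z.re ≤ 0) :
    (11 * (j : ℝ) ^ 2) / (12 * (N : ℝ) ^ 2) * (z.re ^ 2 + 25) ≤
      1 + Real.exp (2 * j * z.re / N)
        - 2 * Real.cos (5 * j / N) * Real.exp (j * z.re / N) ∧
    (11 * (j : ℝ) ^ 2) / (12 * (N : ℝ) ^ 2) * (z.re ^ 2 + 25) ≤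
      ‖1 - Complex.exp (z * j / N)‖ ^ 2 :=
  small_j_lower_bound_general N hN j hj2 z hzim hre1 hre2
end
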